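/- For every constant K > 0 there is no entire strictly convex function u ∈ C^∞(ℝⁿ) satisfying det D²u(x) = K · (1 + |∇u(x)|²)^{(n+2)/2} for all x ∈ ℝⁿ; i.e., there exists no entire strictly convex graph of constant Gauß curvature K > 0. -/

import Mathlib

/-!
The horizontal part `ν = ∇u / √(1 + |∇u|²)` of the unit normal of the graph takes values in the
unit ball and is injective, because the gradient of a strictly convex function is. Its Jacobian
determinant is `det D²u / (1 + |∇u|²)^((n+2)/2)`, the Gauß curvature, hence identically `K > 0`.
By the change of variables formula the bounded set `ν(ℝⁿ)` would then have infinite volume.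
-/

open Set Filter Topology MeasureTheory

noncomputable section

/-- `gradv u x` is the gradient (vector of partial derivatives) of `u` at `x`. -/
def gradv {n : ℕ} (u : (Fin n → ℝ) → ℝ) (x : Fin n → ℝ) : Fin n → ℝ :=
  fun i => fderiv ℝ u x (Pi.single i 1)

/-- `hessM u x` is the Hessian matrix `D²u(x)`. -/
def hessM {n : ℕ} (u : (Fin n → ℝ) → ℝ) (x : Fin n → ℝ) : Matrix (Fin n) (Fin n) ℝ :=
  Matrix.of (fun i j => fderiv ℝ (fun y => fderiv ℝ u y (Pi.single j 1)) x (Pi.single i 1))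

/-- Euclidean inner product on `Fin n → ℝ`. -/
def dotp {n : ℕ} (a b : Fin n → ℝ) : ℝ := ∑ i, a i * b i

/-- Euclidean norm on `Fin n → ℝ`. -/
def eNorm {n : ℕ} (a : Fin n → ℝ) : ℝ := Real.sqrt (dotp a a)

/-- Inner unit normal `ν(x) = -∇Φ(x)/|∇Φ(x)|` for the domain `Ω = {Φ < 0}`. -/
def innerNormal {n : ℕ} (Φ : (Fin n → ℝ) → ℝ) (x : Fin n → ℝ) : Fin n → ℝ :=
  fun i => -(gradv Φ x i) / eNorm (gradv Φ x)

open Matrix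

section Jacobian

variable {E : Type*} [NormedAddCommGroup E] [NormedSpace ℝ E] [FiniteDimensional ℝ E]
  [Nontrivial E] {f : E → E} {f' : E → E →L[ℝ] E} {K : ℝ}

theorem MeasureTheory.Measure.addHaar_range_eq_top_of_le_abs_det [MeasurableSpace E]
    [BorelSpace E] (μ : Measure E) [μ.IsAddHaarMeasure] (hf' : ∀ x, HasFDerivAt f (f' x) x)
    (hf : Function.Injective f) (hK : 0 < K) (hdet : ∀ x, K ≤ |(f' x).det|) :
    μ (range f) = ⊤ := by
  rw [← image_univ, ← lintegral_abs_det_fderiv_eq_addHaar_image μ MeasurableSet.univ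
    (fun x _ => (hf' x).hasFDerivWithinAt) hf.injOn, Measure.restrict_univ, eq_top_iff]
  calc ⊤ = ∫⁻ _, ENNReal.ofReal K ∂μ := by simp [hK]
    _ ≤ ∫⁻ x, ENNReal.ofReal |(f' x).det| ∂μ :=
      lintegral_mono fun x => ENNReal.ofReal_le_ofReal (hdet x)

theorem not_isBounded_range_of_le_abs_det (hf' : ∀ x, HasFDerivAt f (f' x) x)
    (hf : Function.Injective f) (hK : 0 < K) (hdet : ∀ x, K ≤ |(f' x).det|) :
    ¬ Bornology.IsBounded (range f) := by
  let : MeasurableSpace E := borel E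
  have : BorelSpace E := ⟨rfl⟩
  exact fun h => h.measure_lt_top.ne
    (Measure.addHaar.addHaar_range_eq_top_of_le_abs_det hf' hf hK hdet)

end Jacobian

section HorizontalNormal

variable {n : ℕ}

theorem dotp_eq_dotProduct (a b : Fin n → ℝ) : dotp a b = a ⬝ᵥ b := rfl

theorem one_add_dotp_self_pos (p : Fin n → ℝ) : 0 < 1 + dotp p p := by
  have : 0 ≤ dotp p p := Finset.sum_nonneg fun i _ => mul_self_nonneg (p i)
  linarith

theorem dotp_smul_smul (c d : ℝ) (a b : Fin n → ℝ) :
    dotp (c • a) (d • b) = c * d * dotp a b := by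
  simp only [dotp_eq_dotProduct, smul_dotProduct, dotProduct_smul, smul_eq_mul]
  ring

def dotpCLM (p : Fin n → ℝ) : (Fin n → ℝ) →L[ℝ] ℝ := ∑ i, p i • ContinuousLinearMap.proj i

theorem dotpCLM_apply (p w : Fin n → ℝ) : dotpCLM p w = dotp p w := by
  simp [dotpCLM, dotp]

theorem hasFDerivAt_dotp_self (p : Fin n → ℝ) :
    HasFDerivAt (fun q => dotp q q) ((2 : ℝ) • dotpCLM p) p := by
  have h := HasFDerivAt.fun_sum (u := Finset.univ) fun i _ =>
    (hasFDerivAt_apply i p).mul (hasFDerivAt_apply (𝕜 := ℝ) i p)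
  refine h.congr_fderiv ?_
  ext w
  simp [dotpCLM, ← two_mul, Finset.mul_sum]

def normalFactor (p : Fin n → ℝ) : ℝ := (1 + dotp p p) ^ (-(1 / 2 : ℝ))

/-- The first `n` components of the unit normal `(p, -1) / √(1 + |p|²)` to a graph with
gradient `p`. -/
def horizontalNormal (p : Fin n → ℝ) : Fin n → ℝ := normalFactor p • p

theorem normalFactor_pos (p : Fin n → ℝ) : 0 < normalFactor p :=
  Real.rpow_pos_of_pos (one_add_dotp_self_pos p) _

theorem normalFactor_sq (p : Fin n → ℝ) : normalFactor p ^ 2 = (1 + dotp p p)⁻¹ := by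
  rw [normalFactor, ← Real.rpow_natCast, ← Real.rpow_mul (one_add_dotp_self_pos p).le]
  norm_num [Real.rpow_neg_one]

theorem dotp_horizontalNormal_self (p : Fin n → ℝ) :
    dotp (horizontalNormal p) (horizontalNormal p) = dotp p p / (1 + dotp p p) := by
  rw [horizontalNormal, dotp_smul_smul, ← sq, normalFactor_sq, inv_mul_eq_div]

theorem horizontalNormal_injective : Function.Injective (horizontalNormal (n := n)) := by
  intro a b hab
  have hsq := congrArg (fun q => dotp q q) hab
  simp only [dotp_horizontalNormal_self] at hsq
  have hab_sq : dotp a a = dotp b b := by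
    rw [div_eq_div_iff (one_add_dotp_self_pos a).ne' (one_add_dotp_self_pos b).ne'] at hsq
    linarith
  have hfactor : normalFactor a = normalFactor b := by rw [normalFactor, normalFactor, hab_sq]
  rw [horizontalNormal, horizontalNormal, hfactor] at hab
  exact smul_right_injective _ (normalFactor_pos b).ne' hab

theorem norm_horizontalNormal_le_one (p : Fin n → ℝ) : ‖horizontalNormal p‖ ≤ 1 := by
  refine (pi_norm_le_iff_of_nonneg zero_le_one).2 fun i => ?_
  have hpi : p i ^ 2 ≤ dotp p p := by
    simpa [dotp, sq] using
      Finset.single_le_sum (fun j _ => mul_self_nonneg (p j)) (Finset.mem_univ i)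
  have : horizontalNormal p i ^ 2 ≤ 1 := by
    rw [horizontalNormal, Pi.smul_apply, smul_eq_mul, mul_pow, normalFactor_sq,
      inv_mul_le_one₀ (one_add_dotp_self_pos p)]
    linarith
  rw [Real.norm_eq_abs, ← abs_one, ← sq_le_sq]
  simpa using this

theorem hasFDerivAt_normalFactor (p : Fin n → ℝ) :
    HasFDerivAt normalFactor (-(normalFactor p / (1 + dotp p p)) • dotpCLM p) p := by
  have hs := one_add_dotp_self_pos p
  refine (((hasFDerivAt_dotp_self p).const_add 1).rpow_const (p := -(1 / 2 : ℝ))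
    (Or.inl hs.ne')).congr_fderiv ?_
  rw [smul_smul, Real.rpow_sub hs, Real.rpow_one, normalFactor]
  ring_nf

theorem hasFDerivAt_horizontalNormal (p : Fin n → ℝ) :
    HasFDerivAt horizontalNormal (normalFactor p • ContinuousLinearMap.id ℝ (Fin n → ℝ) +
      (-(normalFactor p / (1 + dotp p p)) • dotpCLM p).smulRight p) p :=
  (hasFDerivAt_normalFactor p).smul (hasFDerivAt_id p)

theorem differentiable_horizontalNormal : Differentiable ℝ (horizontalNormal (n := n)) :=
  fun p => (hasFDerivAt_horizontalNormal p).differentiableAt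

theorem det_fderiv_horizontalNormal (p : Fin n → ℝ) :
    (fderiv ℝ horizontalNormal p).det = ((1 + dotp p p) ^ (((n : ℝ) + 2) / 2))⁻¹ := by
  have hs := one_add_dotp_self_pos p
  have hmatrix : LinearMap.toMatrix' (fderiv ℝ horizontalNormal p : (Fin n → ℝ) →ₗ[ℝ] _) =
      normalFactor p • (1 + replicateCol Unit (-(1 + dotp p p)⁻¹ • p) * replicateRow Unit p) := by
    ext i j
    rw [(hasFDerivAt_horizontalNormal p).fderiv]
    simp [LinearMap.toMatrix'_apply, dotpCLM_apply, dotp_eq_dotProduct,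
      dotProduct_single, Pi.single_apply, one_apply, mul_apply]
    split_ifs <;> ring
  have hfactor : normalFactor p ^ n = (1 + dotp p p) ^ (-(n / 2 : ℝ)) := by
    rw [normalFactor, ← Real.rpow_natCast, ← Real.rpow_mul hs.le]
    ring_nf
  have hrank_one : 1 + p ⬝ᵥ (-(1 + dotp p p)⁻¹ • p) = (1 + dotp p p) ^ (-1 : ℝ) := by
    rw [dotProduct_smul, Real.rpow_neg_one, smul_eq_mul, ← dotp_eq_dotProduct]
    field_simp
    ring
  rw [ContinuousLinearMap.det, ← LinearMap.det_toMatrix', hmatrix, det_smul,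
    det_one_add_replicateCol_mul_replicateRow, Fintype.card_fin, hfactor, hrank_one,
    ← Real.rpow_add hs, ← Real.rpow_neg hs.le]
  ring_nf

end HorizontalNormal

section Injective

variable {ι : Type*} [Fintype ι] [DecidableEq ι]

theorem Function.injective_of_posDef_toMatrix'_fderiv {g : (ι → ℝ) → ι → ℝ}
    {g' : (ι → ℝ) → (ι → ℝ) →L[ℝ] ι → ℝ} (hg : ∀ x, HasFDerivAt g (g' x) x)
    (hpos : ∀ x, (LinearMap.toMatrix' (g' x : (ι → ℝ) →ₗ[ℝ] ι → ℝ)).PosDef) :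
    Function.Injective g := by
  intro a b hab
  by_contra hne
  set v := b - a
  have hv : v ≠ 0 := sub_ne_zero.2 (Ne.symm hne)
  have hderiv (t : ℝ) :
      HasDerivAt (fun t : ℝ => v ⬝ᵥ g (a + t • v)) (v ⬝ᵥ g' (a + t • v) v) t := by
    have hline : HasDerivAt (fun t : ℝ => a + t • v) v t := by
      simpa using ((hasDerivAt_id t).smul_const v).const_add a
    have hcurve := (hg _).comp_hasDerivAt t hline
    exact HasDerivAt.fun_sum fun i _ => (hasDerivAt_pi.1 hcurve i).const_mul (v i)
  have hmono : StrictMono fun t : ℝ => v ⬝ᵥ g (a + t • v) :=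
    strictMono_of_deriv_pos fun t => by
      rw [(hderiv t).deriv]
      simpa [LinearMap.toMatrix'_mulVec] using (hpos (a + t • v)).dotProduct_mulVec_pos hv
  have := hmono zero_lt_one
  simp [v, hab] at this

end Injective

section Gradient

variable {n : ℕ} {u : (Fin n → ℝ) → ℝ}

theorem ContDiff.differentiable_gradv (hu : ContDiff ℝ 2 u) : Differentiable ℝ (gradv u) := by
  have hDu : ContDiff ℝ 1 (fderiv ℝ u) := hu.fderiv_right (by norm_num)
  exact differentiable_pi.2 fun i => (hDu.clm_apply contDiff_const).differentiable one_ne_zero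

theorem toMatrix'_fderiv_gradv (hu : ContDiff ℝ 2 u) (x : Fin n → ℝ) :
    LinearMap.toMatrix' (fderiv ℝ (gradv u) x : (Fin n → ℝ) →ₗ[ℝ] _) = (hessM u x)ᵀ := by
  ext i j
  rw [LinearMap.toMatrix'_apply, ContinuousLinearMap.coe_coe,
    fderiv_pi fun k => (differentiable_pi.1 hu.differentiable_gradv k x)]
  rfl

theorem gradv_injective (hu : ContDiff ℝ 2 u) (hpos : ∀ x, (hessM u x).PosDef) :
    Function.Injective (gradv u) :=
  Function.injective_of_posDef_toMatrix'_fderiv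
    (fun x => (hu.differentiable_gradv x).hasFDerivAt) fun x => by
      rw [toMatrix'_fderiv_gradv hu]
      exact (hpos x).transpose

theorem det_fderiv_gradv (hu : ContDiff ℝ 2 u) (x : Fin n → ℝ) :
    (fderiv ℝ (gradv u) x).det = (hessM u x).det := by
  rw [ContinuousLinearMap.det, ← LinearMap.det_toMatrix', toMatrix'_fderiv_gradv hu,
    det_transpose]

end Gradient

/-- There is no entire strictly convex graph of constant Gauß curvature `K > 0`. -/
theorem no_entire_graph_constant_gauss_curvature
    (n : ℕ) (hn : 2 ≤ n) (K : ℝ) (hK : 0 < K) :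
    ¬ ∃ u : (Fin n → ℝ) → ℝ,
      ContDiff ℝ (⊤ : ℕ∞) u ∧
      (∀ x, (hessM u x).PosDef) ∧
      (∀ x, (hessM u x).det =
        K * (1 + dotp (gradv u x) (gradv u x)) ^ (((n : ℝ) + 2) / 2)) := by
  rintro ⟨u, hu, hpos, hdet⟩
  have : Nonempty (Fin n) := ⟨⟨0, by omega⟩⟩
  have hu2 : ContDiff ℝ 2 u := hu.of_le (WithTop.coe_le_coe.2 le_top)
  have hF (x : Fin n → ℝ) : HasFDerivAt (horizontalNormal ∘ gradv u)
      ((fderiv ℝ horizontalNormal (gradv u x)).comp (fderiv ℝ (gradv u) x)) x :=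
    (differentiable_horizontalNormal _).hasFDerivAt.comp x
      (hu2.differentiable_gradv x).hasFDerivAt
  have hjac (x : Fin n → ℝ) :
      ((fderiv ℝ horizontalNormal (gradv u x)).comp (fderiv ℝ (gradv u) x)).det = K := by
    calc _ = (fderiv ℝ horizontalNormal (gradv u x)).det * (fderiv ℝ (gradv u) x).det :=
          LinearMap.det_comp _ _
      _ = K := by
        rw [det_fderiv_horizontalNormal, det_fderiv_gradv hu2, hdet x, mul_comm K,
          inv_mul_cancel_left₀ (Real.rpow_pos_of_pos (one_add_dotp_self_pos _) _).ne']
  refine not_isBounded_range_of_le_abs_det hF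
    (horizontalNormal_injective.comp (gradv_injective hu2 hpos)) hK
    (fun x => (hjac x).symm ▸ (abs_of_pos hK).ge) ?_
  exact (isBounded_iff_forall_norm_le.2
    ⟨1, forall_mem_range.2 norm_horizontalNormal_le_one⟩).subset (range_comp_subset_range _ _)
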